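/- Let λ be a rigid B_n partition with length l, M = (l+1)/2, and symbol (α_1, …, α_M; β_1, …, β_{M−1}) in the B_n theory. Then α_{i+1} ≤ β_i for every 1 ≤ i ≤ M − 1. -/

import Mathlib

/-!
Because consecutive parts differ by at most one, the values `s_k` split into one run of
consecutive integers per distinct part, consecutive runs being separated by a single gap, and
the run of an even part has even length, since even parts have even multiplicity. Stacking the
runs from the smallest part upwards, the odd-length runs start alternately at an odd and at an
even value. Hence the odd values of `s` outnumber the even ones by `0` or `1` (by `1` exactly
when `l` is odd, which `|λ|` odd forces), and for every even value `v < max s - 1` there are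
fewer even values `≤ v` than odd values `≤ v + 3`; near the top the parity of `l` takes over.
Taking for `v` the `i`-th even value `2g_i`, this reads `2f_{i+1} + 1 ≤ 2g_i + 3`, that is
`α_{i+1} ≤ β_i`.
-/

/-- `svals μ` lists the numbers `s_k = l - k + μ_k` (`1 ≤ k ≤ l`, `l` the
length of `μ`), computed with 0-based indices: entry `k` is `(l - 1 - k) + μ_k`.
For weakly decreasing `μ` this list is strictly decreasing. -/
def svals (μ : List ℕ) : List ℕ :=
  μ.mapIdx (fun k a => (μ.length - 1 - k) + a)

/-- The odd values `2f_1+1 < … < 2f_M+1` of `svals μ`, in increasing order. -/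
def oddVals (μ : List ℕ) : List ℕ :=
  ((svals μ).filter (fun x => decide (x % 2 = 1))).reverse

/-- The even values `2g_1 < … < 2g_{M'}` of `svals μ`, in increasing order. -/
def evenVals (μ : List ℕ) : List ℕ :=
  ((svals μ).filter (fun x => decide (x % 2 = 0))).reverse

/-- The top row of the symbol of `μ`: `α_i = f_i - i + 1` where
`2f_i + 1` is the `i`-th smallest odd value of `svals μ` (0-based entry `i`
is `α_{i+1} = f_{i+1} - i`). -/
def topRow (μ : List ℕ) : List ℕ :=
  (oddVals μ).mapIdx (fun i v => (v - 1) / 2 - i)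

/-- The bottom row of the symbol of `μ`: `β_i = g_i - i + 1` where `2g_i` is
the `i`-th smallest even value of `svals μ`. -/
def botRow (μ : List ℕ) : List ℕ :=
  (evenVals μ).mapIdx (fun i v => v / 2 - i)

theorem induction_on_blocks {α : Type*} [LinearOrder α] {P : List α → Prop} (nil : P [])
    (block : ∀ c a μ, 0 < c → (∀ x ∈ μ, x < a) → μ.Pairwise (· ≥ ·) → P μ →
      P (List.replicate c a ++ μ)) :
    ∀ l : List α, l.Pairwise (· ≥ ·) → P l := by
  suffices h : ∀ ν c a, 0 < c → (List.replicate c a ++ ν).Pairwise (· ≥ ·) →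
      P (List.replicate c a ++ ν) by
    rintro (_ | ⟨a, ν⟩) hl
    · exact nil
    · exact h ν 1 a one_pos hl
  intro ν
  induction ν with
  | nil => exact fun c a hc _ => block c a [] hc (by simp) .nil nil
  | cons x ν ih =>
    intro c a hc hl
    have hsub : (x :: ν).Pairwise (· ≥ ·) := hl.sublist (List.sublist_append_right _ _)
    have hxa : x ≤ a := List.pairwise_append.1 hl |>.2.2 a (List.mem_replicate.2 ⟨hc.ne', rfl⟩) x
      List.mem_cons_self
    rcases hxa.eq_or_lt with rfl | hxa
    · simpa [List.replicate_succ'] using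
        ih (c + 1) x c.succ_pos (by simpa [List.replicate_succ'] using hl)
    · refine block c a _ hc (fun y hy => lt_of_le_of_lt ?_ hxa) hsub
        (by simpa using ih 1 x one_pos (by simpa using hsub))
      rcases List.mem_cons.1 hy with rfl | hy
      · exact le_rfl
      · exact List.rel_of_pairwise_cons hsub hy

theorem getElem_le_iff_lt_countP {α : Type*} [LinearOrder α] {l : List α}
    (hl : l.Pairwise (· < ·)) {i : ℕ} (hi : i < l.length) (x : α) :
    l[i] ≤ x ↔ i < l.countP (· ≤ x) := by
  have hsplit : l = l.take i ++ l[i] :: l.drop (i + 1) := by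
    rw [← List.drop_eq_getElem_cons hi, List.take_append_drop]
  have hl' := hsplit ▸ hl
  simp only [List.pairwise_append, List.pairwise_cons, List.mem_cons] at hl'
  obtain ⟨-, ⟨hgt, -⟩, hlt⟩ := hl'
  have hlen : (l.take i).length = i := List.length_take_of_le hi.le
  rw [congrArg (List.countP (· ≤ x)) hsplit, List.countP_append, List.countP_cons]
  constructor
  · intro h
    have htake : (l.take i).countP (· ≤ x) = i :=
      .trans (List.countP_eq_length.2 fun y hy => by
        simpa using (hlt y hy l[i] (.inl rfl)).le.trans h) hlen
    simp [htake, h]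
  · intro h
    by_contra! hx
    have h1 : (l.drop (i + 1)).countP (· ≤ x) = 0 :=
      List.countP_eq_zero.2 fun y hy => by simpa using hx.trans (hgt y hy)
    have h2 := hlen ▸ (l.take i).countP_le_length (p := (· ≤ x))
    simp [h1, not_le.2 hx] at h
    omega

-- `(n + 1 - r) / 2` is the number of `y < n` with `y % 2 = r`.
theorem countP_range'_le_mod_two (p c x r : ℕ) (hr : r < 2) :
    (List.range' p c).countP (fun y => y ≤ x ∧ y % 2 = r) =
      (min (x + 1) (p + c) + 1 - r) / 2 - (p + 1 - r) / 2 := by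
  induction c with
  | zero => simp; omega
  | succ c ih =>
    rw [List.range'_concat, List.countP_append, ih, List.countP_singleton]
    split <;> simp_all <;> omega

theorem countP_range'_mod_two (p c r : ℕ) (hr : r < 2) :
    (List.range' p c).countP (fun y => y % 2 = r) = (p + c + 1 - r) / 2 - (p + 1 - r) / 2 := by
  induction c with
  | zero => simp
  | succ c ih =>
    rw [List.range'_concat, List.countP_append, ih, List.countP_singleton]
    split <;> simp_all <;> omega

theorem isChain_of_getD {α : Type*} {R : α → α → Prop} {l : List α} {d : α}
    (h : ∀ i : ℕ, i + 1 < l.length → R (l.getD i d) (l.getD (i + 1) d)) : l.IsChain R :=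
  List.isChain_iff_getElem.2 fun i hi => by
    simpa only [List.getD_eq_getElem _ _ (Nat.lt_of_succ_lt hi), List.getD_eq_getElem _ _ hi]
      using h i hi

theorem even_length_add_sum {l : List ℕ} (hl : ∀ m : ℕ, Even m → Even (l.count m)) :
    Even (l.length + l.sum) := by
  rw [← List.sum_toFinset_count_eq_length, Finset.sum_list_count, ← Finset.sum_add_distrib]
  refine Finset.even_sum _ fun m _ => ?_
  rw [smul_eq_mul, add_comm, ← mul_add_one]
  rcases Nat.even_or_odd m with hm | hm
  · exact (hl m hm).mul_right _
  · exact hm.add_one.mul_left _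

theorem even_count_of_replicate_append {c a : ℕ} {μ : List ℕ} (hμ : ∀ x ∈ μ, x < a)
    (h : ∀ m : ℕ, Even m → Even ((List.replicate c a ++ μ).count m)) :
    (Even a → Even c) ∧ ∀ m : ℕ, Even m → Even (μ.count m) := by
  have hcount : ∀ m, (List.replicate c a ++ μ).count m = (if a = m then c else 0) + μ.count m :=
    fun m => by simp [List.count_replicate]
  have ha : μ.count a = 0 := List.count_eq_zero.2 fun h => (hμ a h).false
  refine ⟨fun hae => by simpa [hcount, ha] using h a hae, fun m hm => ?_⟩
  by_cases ham : a = m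
  · exact ham ▸ ha ▸ .zero
  · simpa [hcount, ham] using h m hm

def parityCountLE (s : List ℕ) (r x : ℕ) : ℕ := s.countP (fun y => y ≤ x ∧ y % 2 = r)

def ParityBalanced (s : List ℕ) : Prop :=
  s.countP (· % 2 = 0) ≤ s.countP (· % 2 = 1) ∧ s.countP (· % 2 = 1) ≤ s.countP (· % 2 = 0) + 1

def OddsOutnumberEvens (s : List ℕ) : Prop :=
  ∀ v ∈ s, ∀ w ∈ s, v % 2 = 0 → v + 2 ≤ w → parityCountLE s 0 v < parityCountLE s 1 (v + 3)

theorem length_eq_countP_even_add_countP_odd (s : List ℕ) :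
    s.length = s.countP (· % 2 = 0) + s.countP (· % 2 = 1) := by
  rw [s.length_eq_countP_add_countP (· % 2 = 0)]
  congr 1
  exact List.countP_congr fun y _ => by simp

theorem parityCountLE_eq_countP {s : List ℕ} {r x : ℕ} (h : ∀ y ∈ s, y % 2 = r → y ≤ x) :
    parityCountLE s r x = s.countP (· % 2 = r) :=
  List.countP_congr fun y hy => by simpa using h y hy

theorem parityCountLE_run_append (s : List ℕ) (p c x : ℕ) {r : ℕ} (hr : r < 2) :
    parityCountLE ((List.range' p c).reverse ++ s) r x =
      (min (x + 1) (p + c) + 1 - r) / 2 - (p + 1 - r) / 2 + parityCountLE s r x := by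
  rw [parityCountLE, List.countP_append, List.countP_reverse, countP_range'_le_mod_two p c x r hr]
  rfl

theorem parityBalanced_run_append {s : List ℕ} {p c : ℕ} (hs : ParityBalanced s)
    (hc : c % 2 = 1 → (p + s.length) % 2 = 1) :
    ParityBalanced ((List.range' p c).reverse ++ s) := by
  have hlen := length_eq_countP_even_add_countP_odd s
  simp only [ParityBalanced, List.countP_append, List.countP_reverse,
    countP_range'_mod_two p c _ two_pos, countP_range'_mod_two p c _ one_lt_two] at hs ⊢
  omega

theorem oddsOutnumberEvens_run_append {s : List ℕ} {p c : ℕ} (hb : ParityBalanced s)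
    (ho : OddsOutnumberEvens s) (hlt : ∀ y ∈ s, y + 2 ≤ p) (htop : s ≠ [] → p - 2 ∈ s)
    (hc : c % 2 = 1 → (p + s.length) % 2 = 1) :
    OddsOutnumberEvens ((List.range' p c).reverse ++ s) := by
  intro v hv w hw hv0 hvw
  have hlen := length_eq_countP_even_add_countP_odd s
  obtain ⟨hb₁, hb₂⟩ := hb
  rw [parityCountLE_run_append s p c v two_pos,
    parityCountLE_run_append s p c (v + 3) one_lt_two]
  simp only [List.mem_append, List.mem_reverse, List.mem_range'_1] at hv hw
  rcases hv with hvR | hvs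
  · have hwR : w < p + c := hw.elim And.right fun hws => by have := hlt w hws; omega
    rw [parityCountLE_eq_countP fun y hy _ => by have := hlt y hy; omega,
      parityCountLE_eq_countP fun y hy _ => by have := hlt y hy; omega]
    omega
  · have hvp := hlt v hvs
    by_cases hbelow : ∃ w' ∈ s, v + 2 ≤ w'
    · obtain ⟨w', hw', hvw'⟩ := hbelow
      have := ho v hvs w' hw' hv0 hvw'
      omega
    · -- `v` is one of the two largest values of `s`; the odd value the inequality needs comes
      -- from `s` itself when `|s|` is odd, and from the new run otherwise.
      push Not at hbelow
      have hpv := hbelow _ (htop (List.ne_nil_of_mem hvs))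
      have hwR : p ≤ w ∧ w < p + c := hw.resolve_right fun hws => by have := hbelow w hws; omega
      rw [parityCountLE_eq_countP fun y hy _ => by have := hbelow y hy; omega,
        parityCountLE_eq_countP fun y hy _ => by have := hbelow y hy; omega]
      omega

theorem svals_cons (a : ℕ) (μ : List ℕ) : svals (a :: μ) = (μ.length + a) :: svals μ := by
  simp only [svals, List.mapIdx_cons, List.length_cons, Nat.sub_zero, Nat.add_sub_cancel]
  congr 2
  funext k b
  omega

theorem svals_replicate_append (c a : ℕ) (μ : List ℕ) :
    svals (List.replicate c a ++ μ) = (List.range' (μ.length + a) c).reverse ++ svals μ := by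
  induction c with
  | zero => rfl
  | succ c ih =>
    rw [List.replicate_succ, List.cons_append, svals_cons, ih, List.range'_concat]
    simp only [List.length_append, List.length_replicate, List.reverse_append,
      List.reverse_singleton, List.cons_append]
    congr 1
    omega

theorem length_svals (μ : List ℕ) : (svals μ).length = μ.length :=
  List.length_mapIdx

theorem svals_pairwise_gt {μ : List ℕ} (hμ : μ.Pairwise (· ≥ ·)) : (svals μ).Pairwise (· > ·) := by
  refine List.pairwise_iff_getElem.2 fun i j hi hj hij => ?_
  rw [length_svals] at hi hj
  have hle := List.pairwise_iff_getElem.1 hμ i j hi hj hij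
  simp only [svals, List.getElem_mapIdx]
  omega

theorem le_of_mem_svals_cons {x y : ℕ} {μ : List ℕ} (h : (x :: μ).Pairwise (· ≥ ·))
    (hy : y ∈ svals (x :: μ)) : y ≤ μ.length + x := by
  have hsv := svals_pairwise_gt h
  rw [svals_cons] at hsv hy
  rcases List.mem_cons.1 hy with rfl | hy
  · exact le_rfl
  · exact (List.rel_of_pairwise_cons hsv hy).le

theorem parityBalanced_and_oddsOutnumberEvens_svals {l : List ℕ} (hl : l.Pairwise (· ≥ ·))
    (hgap : l.IsChain (fun x y => x ≤ y + 1)) (heven : ∀ m : ℕ, Even m → Even (l.count m)) :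
    ParityBalanced (svals l) ∧ OddsOutnumberEvens (svals l) := by
  revert hgap heven
  refine induction_on_blocks (P := fun l => l.IsChain (fun x y => x ≤ y + 1) →
    (∀ m : ℕ, Even m → Even (l.count m)) → ParityBalanced (svals l) ∧ OddsOutnumberEvens (svals l))
    (fun _ _ => ⟨by simp [ParityBalanced, svals], by simp [OddsOutnumberEvens, svals]⟩) ?_ l hl
  intro c a μ hc hμa hμ ih hgap heven
  obtain ⟨hac, hμeven⟩ := even_count_of_replicate_append hμa heven
  obtain ⟨-, hμgap, hjoin⟩ := List.isChain_append.1 hgap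
  obtain ⟨hb, ho⟩ := ih hμgap hμeven
  have hodd : c % 2 = 1 → (μ.length + a + (svals μ).length) % 2 = 1 := fun hc1 => by
    have ha : a % 2 = 1 := Nat.not_even_iff.1 fun ha => by have := Nat.even_iff.1 (hac ha); omega
    rw [length_svals]
    omega
  have htop : (∀ y ∈ svals μ, y + 2 ≤ μ.length + a) ∧
      (svals μ ≠ [] → μ.length + a - 2 ∈ svals μ) := by
    cases μ with
    | nil => simp [svals]
    | cons x μ =>
      have hxa : x + 1 = a := by
        have h1 := hμa x List.mem_cons_self
        have h2 := hjoin a (by simp [List.getLast?_replicate, hc.ne']) x rfl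
        omega
      refine ⟨fun y hy => ?_, fun _ => ?_⟩
      · have := le_of_mem_svals_cons hμ hy
        simp only [List.length_cons]
        omega
      · rw [svals_cons, List.length_cons, ← hxa]
        exact List.mem_cons.2 (.inl (by omega))
  rw [svals_replicate_append]
  exact ⟨parityBalanced_run_append hb hodd,
    oddsOutnumberEvens_run_append hb ho htop.1 htop.2 hodd⟩

theorem parityCountLE_lt_of_odd_length {s : List ℕ} (hb : ParityBalanced s)
    (ho : OddsOutnumberEvens s) (hodd : s.length % 2 = 1) {v : ℕ} (hv : v ∈ s) (hv0 : v % 2 = 0) :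
    parityCountLE s 0 v < parityCountLE s 1 (v + 3) := by
  by_cases habove : ∃ w ∈ s, v + 2 ≤ w
  · obtain ⟨w, hw, hvw⟩ := habove
    exact ho v hv w hw hv0 hvw
  · push Not at habove
    have hlen := length_eq_countP_even_add_countP_odd s
    have heven : parityCountLE s 0 v ≤ s.countP (· % 2 = 0) :=
      List.countP_mono_left fun y _ => by simp_all
    rw [parityCountLE_eq_countP (x := v + 3) fun y hy _ => by have := habove y hy; omega]
    obtain ⟨hb₁, hb₂⟩ := hb
    omega

theorem countP_le_oddVals (μ : List ℕ) (x : ℕ) :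
    (oddVals μ).countP (· ≤ x) = parityCountLE (svals μ) 1 x := by
  rw [oddVals, List.countP_reverse, List.countP_filter]
  exact List.countP_congr fun y _ => by simp

theorem countP_le_evenVals (μ : List ℕ) (x : ℕ) :
    (evenVals μ).countP (· ≤ x) = parityCountLE (svals μ) 0 x := by
  rw [evenVals, List.countP_reverse, List.countP_filter]
  exact List.countP_congr fun y _ => by simp

theorem oddVals_pairwise_lt {μ : List ℕ} (hμ : μ.Pairwise (· ≥ ·)) :
    (oddVals μ).Pairwise (· < ·) :=
  List.pairwise_reverse.2 ((svals_pairwise_gt hμ).filter _)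

theorem evenVals_pairwise_lt {μ : List ℕ} (hμ : μ.Pairwise (· ≥ ·)) :
    (evenVals μ).Pairwise (· < ·) :=
  List.pairwise_reverse.2 ((svals_pairwise_gt hμ).filter _)

theorem mem_svals_of_mem_evenVals {μ : List ℕ} {v : ℕ} (hv : v ∈ evenVals μ) :
    v ∈ svals μ ∧ v % 2 = 0 := by
  simpa [evenVals] using hv

theorem length_oddVals_and_length_evenVals {μ : List ℕ} (hb : ParityBalanced (svals μ))
    (hodd : μ.length % 2 = 1) :
    (oddVals μ).length = (μ.length + 1) / 2 ∧ (evenVals μ).length = (μ.length + 1) / 2 - 1 := by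
  have hlen := length_eq_countP_even_add_countP_odd (svals μ)
  rw [length_svals] at hlen
  rw [oddVals, evenVals, List.length_reverse, List.length_reverse,
    ← List.countP_eq_length_filter, ← List.countP_eq_length_filter]
  obtain ⟨hb₁, hb₂⟩ := hb
  omega

theorem getElem_oddVals_le_getElem_evenVals_add_three {μ : List ℕ} (hμ : μ.Pairwise (· ≥ ·))
    (hb : ParityBalanced (svals μ)) (ho : OddsOutnumberEvens (svals μ)) (hodd : μ.length % 2 = 1)
    {j : ℕ} (hjO : j + 1 < (oddVals μ).length) (hjE : j < (evenVals μ).length) :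
    (oddVals μ)[j + 1] ≤ (evenVals μ)[j] + 3 := by
  obtain ⟨hv, hv0⟩ := mem_svals_of_mem_evenVals (List.getElem_mem hjE)
  have hrank := (getElem_le_iff_lt_countP (evenVals_pairwise_lt hμ) hjE _).1 le_rfl
  have hlt := parityCountLE_lt_of_odd_length hb ho (by rwa [length_svals]) hv hv0
  rw [countP_le_evenVals] at hrank
  rw [getElem_le_iff_lt_countP (oddVals_pairwise_lt hμ), countP_le_oddVals]
  omega

theorem Bn_symbol_ineq_general (n : ℕ) (lam : List ℕ) (M : ℕ)
    (hsort : lam.Pairwise (· ≥ ·))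
    (hsum : lam.sum = 2 * n + 1)
    (hBn : ∀ m : ℕ, Even m → Even (lam.count m))
    (hgap : ∀ i : ℕ, i + 1 < lam.length → lam.getD i 0 ≤ lam.getD (i + 1) 0 + 1)
    (hM : M = (lam.length + 1) / 2) :
    ∀ i : ℕ, 1 ≤ i → i ≤ M - 1 →
      (topRow lam).getD i 0 ≤ (botRow lam).getD (i - 1) 0 := by
  intro i hi hiM
  obtain ⟨j, rfl⟩ : ∃ j, i = j + 1 := ⟨i - 1, by omega⟩
  have hodd : lam.length % 2 = 1 := by
    obtain ⟨k, hk⟩ := even_length_add_sum hBn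
    omega
  obtain ⟨hb, ho⟩ := parityBalanced_and_oddsOutnumberEvens_svals hsort (isChain_of_getD hgap) hBn
  obtain ⟨hO, hE⟩ := length_oddVals_and_length_evenVals hb hodd
  have hjO : j + 1 < (oddVals lam).length := by omega
  have hjE : j < (evenVals lam).length := by omega
  have hkey := getElem_oddVals_le_getElem_evenVals_add_three hsort hb ho hodd hjO hjE
  rw [Nat.add_sub_cancel, topRow, botRow, List.getD_eq_getElem _ _ (by simpa using hjO),
    List.getD_eq_getElem _ _ (by simpa using hjE), List.getElem_mapIdx, List.getElem_mapIdx]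
  omega

/-- For a rigid `B_n` partition `lam` with length `l`, `M = (l+1)/2`, and
symbol `(α_1, …, α_M; β_1, …, β_{M-1})` in the `B_n` theory, one has
`α_{i+1} ≤ β_i` for every `1 ≤ i ≤ M - 1` (1-based entry `α_q` is the
0-based entry `q - 1` of `topRow lam`, similarly for `β`). -/
theorem Bn_symbol_ineq (n : ℕ) (lam : List ℕ) (M : ℕ)
    (hsort : lam.Pairwise (· ≥ ·))
    (hpos : ∀ x ∈ lam, 0 < x)
    (hsum : lam.sum = 2 * n + 1)
    (hBn : ∀ m : ℕ, Even m → Even (lam.count m))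
    (hgap : ∀ i : ℕ, i + 1 < lam.length → lam.getD i 0 ≤ lam.getD (i + 1) 0 + 1)
    (hrig : ∀ m : ℕ, Odd m → lam.count m ≠ 2)
    (hM : M = (lam.length + 1) / 2) :
    ∀ i : ℕ, 1 ≤ i → i ≤ M - 1 →
      (topRow lam).getD i 0 ≤ (botRow lam).getD (i - 1) 0 :=
  Bn_symbol_ineq_general n lam M hsort hsum hBn hgap hM
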